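/- If EJ α t ≠ 0 for some t, then the number of nonzero letters in α is even, and moreover every nonzero letter appears in α an even number of times. -/

import Mathlib

open intervalIntegral

noncomputable def EJrev : List ℕ → ℝ → ℝ
  | [], _ => 1
  | [a], t => if a = 0 then ∫ s in (0:ℝ)..t, EJrev [] s else 0
  | a :: b :: rest, t =>
      if a = 0 then ∫ s in (0:ℝ)..t, EJrev (b :: rest) s
      else if b = a then (1/2) * ∫ s in (0:ℝ)..t, EJrev rest s
      else 0

/-- Expectation of the Stratonovich iterated integral `J_α(t)`, defined by the
recursion on the last letter of the word. -/
noncomputable def EJ (α : List ℕ) (t : ℝ) : ℝ := EJrev α.reverse t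

/-- A block is `[0]` or `[m,m]` with `m ≠ 0`. -/
def IsBlock (b : List ℕ) : Prop := b = [0] ∨ ∃ m : ℕ, m ≠ 0 ∧ b = [m, m]

/-- A word is admissible if it is a concatenation of blocks. -/
def Admissible (α : List ℕ) : Prop :=
  ∃ L : List (List ℕ), (∀ b ∈ L, IsBlock b) ∧ L.flatten = α

/-! If `EJ α t ≠ 0`, every step of the recursion defining it takes a nonvanishing branch, so
the last letter of the current word is either `0` or a nonzero letter repeated twice. Peeling
letters off this way splits `α` into blocks `[0]` and `[m, m]`, and each block contains every
nonzero letter an even number of times. -/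

@[elab_as_elim]
theorem Admissible.induction_on {P : List ℕ → Prop} {α : List ℕ} (h : Admissible α)
    (nil : P []) (cons_zero : ∀ α, P α → P (0 :: α))
    (cons_cons : ∀ m α, m ≠ 0 → P α → P (m :: m :: α)) : P α := by
  obtain ⟨L, hL, rfl⟩ := h
  induction L with
  | nil => exact nil
  | cons b L ih =>
    have hL' : ∀ c ∈ L, IsBlock c := fun c hc => hL c (List.mem_cons_of_mem b hc)
    rcases hL b List.mem_cons_self with rfl | ⟨m, hm, rfl⟩
    · exact cons_zero _ (ih hL')
    · exact cons_cons m _ hm (ih hL')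

theorem Admissible.nil : Admissible [] := ⟨[], by simp, rfl⟩

theorem Admissible.cons_zero {α : List ℕ} (h : Admissible α) : Admissible (0 :: α) := by
  obtain ⟨L, hL, rfl⟩ := h
  exact ⟨[0] :: L, List.forall_mem_cons.2 ⟨Or.inl rfl, hL⟩, rfl⟩

theorem Admissible.cons_cons {m : ℕ} {α : List ℕ} (hm : m ≠ 0) (h : Admissible α) :
    Admissible (m :: m :: α) := by
  obtain ⟨L, hL, rfl⟩ := h
  exact ⟨[m, m] :: L, List.forall_mem_cons.2 ⟨Or.inr ⟨m, hm, rfl⟩, hL⟩, rfl⟩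

theorem IsBlock.reverse {b : List ℕ} (hb : IsBlock b) : b.reverse = b := by
  rcases hb with rfl | ⟨m, -, rfl⟩ <;> rfl

theorem Admissible.reverse {α : List ℕ} (h : Admissible α) : Admissible α.reverse := by
  obtain ⟨L, hL, rfl⟩ := h
  refine ⟨L.reverse, by simpa using hL, ?_⟩
  rw [List.reverse_flatten, List.map_congr_left (fun b hb => (hL b hb).reverse), List.map_id']

theorem Admissible.even_count {α : List ℕ} (h : Admissible α) {m : ℕ} (hm : m ≠ 0) :
    Even (α.count m) := by
  refine h.induction_on (by simp) (fun β ih => ?_) (fun k β _ ih => ?_)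
  · rwa [List.count_cons_of_ne hm.symm]
  · by_cases hkm : k = m
    · subst hkm
      simpa [List.count_cons_self, add_assoc, Nat.even_add_one] using ih
    · rwa [List.count_cons_of_ne hkm, List.count_cons_of_ne hkm]

theorem Admissible.even_length_filter_ne_zero {α : List ℕ} (h : Admissible α) :
    Even (α.filter (· ≠ 0)).length := by
  refine h.induction_on (by simp) (fun β ih => by simpa using ih) (fun k β hk ih => ?_)
  simpa [hk, add_assoc, Nat.even_add_one] using ih

theorem exists_ne_zero_of_intervalIntegral_ne_zero {f : ℝ → ℝ} {a b : ℝ}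
    (h : ∫ s in a..b, f s ≠ 0) : ∃ s, f s ≠ 0 := by
  contrapose! h
  simp [h]

theorem admissible_of_EJrev_ne_zero {α : List ℕ} {t : ℝ} (h : EJrev α t ≠ 0) :
    Admissible α := by
  induction α, t using EJrev.induct with
  | case1 => exact .nil
  | case2 => exact Admissible.nil.cons_zero
  | case3 a t ha => simp [EJrev, ha] at h
  | case4 b rest t ih =>
    rw [EJrev, if_pos rfl] at h
    obtain ⟨s, hs⟩ := exists_ne_zero_of_intervalIntegral_ne_zero h
    exact (ih s hs).cons_zero
  | case5 b rest t hb ih =>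
    rw [EJrev, if_neg hb, if_pos rfl] at h
    obtain ⟨s, hs⟩ := exists_ne_zero_of_intervalIntegral_ne_zero (right_ne_zero_of_mul h)
    exact (ih s hs).cons_cons hb
  | case6 a b rest t ha hba => simp [EJrev, ha, hba] at h

theorem stmt14 (α : List ℕ) (h : ∃ t : ℝ, EJ α t ≠ 0) :
    Even (α.filter (· ≠ 0)).length ∧ ∀ m : ℕ, m ≠ 0 → Even (α.count m) := by
  obtain ⟨t, ht⟩ := h
  have hα : Admissible α := by
    simpa using (admissible_of_EJrev_ne_zero ht).reverse
  exact ⟨hα.even_length_filter_ne_zero, fun m hm => hα.even_count hm⟩
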